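/- arXiv:2112.13164 — 6 statements merged into one kernel-verified Lean document; each statement's English description precedes it below -/
import Mathlib

section
/- Let n, L ≥ 1 and b : Fin n → Fin L, with pinching map P_b. (i) If X ∈ M_n(ℂ) is positive semidefinite, then (1/L)·‖X‖_op ≤ ‖P_b(X)‖_op. (ii) For every X ∈ M_n(ℂ), (1/√L)·‖X‖_op ≤ √‖P_b(XᴴX)‖_op; that is, the operator norm is bounded by √L times the Frobenius–Rieffel norm associated to the block-diagonal subalgebra determined by b. -/
open Matrix
open scoped Matrix.Norms.L2Operator ComplexOrder

/-!
Write `x = ∑ₗ x Qₗ` with `Qₗ` the diagonal projection onto the `l`-th block, so that the pinching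
of `x⋆x` is `∑ₗ (x Qₗ)⋆(x Qₗ)`. The operator Cauchy–Schwarz inequality
`(∑ aₗ)⋆(∑ aₗ) ≤ L ∑ aₗ⋆aₗ`, which holds because the difference is half of
`∑ₗₘ (aₗ - aₘ)⋆(aₗ - aₘ) ≥ 0`, together with monotonicity of the norm on positive elements of a
C⋆-algebra, gives `‖x‖² ≤ L ‖P(x⋆x)‖`. This is (ii), and (i) follows by writing `X = B⋆B`.
-/

open Finset in
lemma sum_sum_star_sub_mul_sub_add_two_nsmul {R ι : Type*} [NonUnitalRing R] [StarRing R]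
    [Fintype ι] (a : ι → R) :
    ∑ i, ∑ j, star (a i - a j) * (a i - a j) + 2 • (star (∑ i, a i) * ∑ i, a i) =
      2 • (Fintype.card ι • ∑ i, star (a i) * a i) := by
  simp only [star_sub, sub_mul, mul_sub, sum_sub_distrib, star_sum, sum_mul, mul_sum,
    sum_const, card_univ, ← smul_sum]
  rw [sum_comm (f := fun i j => star (a j) * a i)]
  abel

section CStarAlgebra

variable {A : Type*} [NonUnitalCStarAlgebra A] [PartialOrder A] [StarOrderedRing A]

lemma norm_sum_sq_le_card_mul_norm_sum_star_mul_self {ι : Type*} [Fintype ι] (a : ι → A) :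
    ‖∑ i, a i‖ ^ 2 ≤ Fintype.card ι * ‖∑ i, star (a i) * a i‖ := by
  have hle : 2 • (star (∑ i, a i) * ∑ i, a i) ≤
      2 • (Fintype.card ι • ∑ i, star (a i) * a i) := by
    rw [← sum_sum_star_sub_mul_sub_add_two_nsmul]
    exact le_add_of_nonneg_left <| Finset.sum_nonneg fun _ _ =>
      Finset.sum_nonneg fun _ _ => star_mul_self_nonneg _
  have hnorm := CStarAlgebra.norm_le_norm_of_nonneg_of_le
    (nsmul_nonneg (star_mul_self_nonneg _) 2) hle
  simp only [RCLike.norm_nsmul ℂ, CStarRing.norm_star_mul_self, nsmul_eq_mul,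
    Nat.cast_ofNat] at hnorm
  nlinarith

end CStarAlgebra

lemma norm_sq_le_card_mul_norm_sum_mul_star_mul_self_mul {A : Type*} [CStarAlgebra A]
    [PartialOrder A] [StarOrderedRing A] {ι : Type*} [Fintype ι] {p : ι → A}
    (hp : ∀ i, IsSelfAdjoint (p i)) (hp_sum : ∑ i, p i = 1) (x : A) :
    ‖x‖ ^ 2 ≤ Fintype.card ι * ‖∑ i, p i * (star x * x) * p i‖ := by
  have h := norm_sum_sq_le_card_mul_norm_sum_star_mul_self fun i => x * p i
  rw [← Finset.mul_sum, hp_sum, mul_one] at h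
  simpa only [star_mul, (hp _).star_eq, mul_assoc] using h

namespace Matrix

variable {n L : ℕ}

def pinching (b : Fin n → Fin L) (X : Matrix (Fin n) (Fin n) ℂ) : Matrix (Fin n) (Fin n) ℂ :=
  of fun j k => if b j = b k then X j k else 0

def blockProjection (b : Fin n → Fin L) (l : Fin L) : Matrix (Fin n) (Fin n) ℂ :=
  diagonal fun j => if b j = l then 1 else 0

lemma isSelfAdjoint_blockProjection (b : Fin n → Fin L) (l : Fin L) :
    IsSelfAdjoint (blockProjection b l) := by
  simp [IsSelfAdjoint, blockProjection, star_eq_conjTranspose, diagonal_conjTranspose, apply_ite]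

lemma sum_blockProjection (b : Fin n → Fin L) : ∑ l, blockProjection b l = 1 := by
  ext j k
  simp [blockProjection, sum_apply, diagonal_apply, one_apply]

lemma pinching_eq_sum (b : Fin n → Fin L) (X : Matrix (Fin n) (Fin n) ℂ) :
    pinching b X = ∑ l, blockProjection b l * X * blockProjection b l := by
  ext j k
  simp [pinching, blockProjection, sum_apply, diagonal_mul, mul_diagonal]

open scoped MatrixOrder in
lemma opNorm_sq_le_mul_opNorm_pinching (b : Fin n → Fin L) (X : Matrix (Fin n) (Fin n) ℂ) :
    ‖X‖ ^ 2 ≤ L * ‖pinching b (Xᴴ * X)‖ := by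
  simpa [pinching_eq_sum, star_eq_conjTranspose] using
    norm_sq_le_card_mul_norm_sum_mul_star_mul_self_mul (isSelfAdjoint_blockProjection b)
      (sum_blockProjection b) X

end Matrix

theorem pinching_opNorm_equivalence_constants_general
    (n L : ℕ) (b : Fin n → Fin L)
    (P : Matrix (Fin n) (Fin n) ℂ → Matrix (Fin n) (Fin n) ℂ)
    (hP : ∀ X, P X = Matrix.of fun j k => if b j = b k then X j k else 0) :
    (∀ X : Matrix (Fin n) (Fin n) ℂ, X.PosSemidef → (L : ℝ)⁻¹ * ‖X‖ ≤ ‖P X‖) ∧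
    (∀ X : Matrix (Fin n) (Fin n) ℂ,
      (Real.sqrt L)⁻¹ * ‖X‖ ≤ Real.sqrt ‖P (Xᴴ * X)‖) := by
  have hP : ∀ X, P X = pinching b X := hP
  refine ⟨fun X hX => ?_, fun X => ?_⟩
  · obtain ⟨B, rfl⟩ : ∃ B : Matrix (Fin n) (Fin n) ℂ, X = star B * B := by
      open scoped MatrixOrder in exact CStarAlgebra.nonneg_iff_eq_star_mul_self.mp hX.nonneg
    rw [hP, CStarRing.norm_star_mul_self, ← sq]
    exact inv_mul_le_of_le_mul₀ (by positivity) (norm_nonneg _)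
      (opNorm_sq_le_mul_opNorm_pinching b B)
  · rw [hP]
    refine inv_mul_le_of_le_mul₀ (by positivity) (by positivity) ?_
    rw [← Real.sqrt_mul (Nat.cast_nonneg L), ← Real.sqrt_sq (norm_nonneg X)]
    exact Real.sqrt_le_sqrt (opNorm_sq_le_mul_opNorm_pinching b X)

/-- Equivalence constants for the pinching onto the block-diagonal subalgebra determined
by `b : Fin n → Fin L`: (i) `(1/L)·‖X‖_op ≤ ‖P_b X‖_op` for positive semidefinite `X`;
(ii) `(1/√L)·‖X‖_op ≤ √‖P_b (XᴴX)‖_op` for all `X`. -/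
theorem pinching_opNorm_equivalence_constants
    (n L : ℕ) (hn : 1 ≤ n) (hL : 1 ≤ L) (b : Fin n → Fin L)
    (P : Matrix (Fin n) (Fin n) ℂ → Matrix (Fin n) (Fin n) ℂ)
    (hP : ∀ X, P X = Matrix.of fun j k => if b j = b k then X j k else 0) :
    (∀ X : Matrix (Fin n) (Fin n) ℂ, X.PosSemidef → (L : ℝ)⁻¹ * ‖X‖ ≤ ‖P X‖) ∧
    (∀ X : Matrix (Fin n) (Fin n) ℂ,
      (Real.sqrt L)⁻¹ * ‖X‖ ≤ Real.sqrt ‖P (Xᴴ * X)‖) :=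
  pinching_opNorm_equivalence_constants_general n L b P hP
end

section
/- Let L ≥ 1 and m, d : Fin L → ℕ with m(i) ≥ 1 and d(i) ≥ 1 for all i, and let ι = Σ (i : Fin L), Fin (m i) × Fin (d i). Let P_λ : M_ι(ℂ) → M_ι(ℂ) be the conditional expectation onto the subalgebra B_λ = ⊕_i (I_{m(i)} ⊗ M_{d(i)}(ℂ)), given by (P_λ X)(⟨i,s,p⟩, ⟨i',s',q⟩) = (1/m(i))·Σ_{t : Fin (m i)} X(⟨i,t,p⟩, ⟨i,t,q⟩) if i = i' and s = s', and 0 otherwise. Set r = Σ_i m(i) and ℓ = lcm{m(i) : i}. Then: (i) for every positive semidefinite X ∈ M_ι(ℂ), ‖P_λ(X)‖_op ≥ (1/(r·ℓ))·‖X‖_op; and (ii) for every X ∈ M_ι(ℂ), √‖P_λ(XᴴX)‖_op ≥ (1/√(r·ℓ))·‖X‖_op. -/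
open Matrix
open scoped Matrix.Norms.L2Operator ComplexOrder

/-- The trace-preserving conditional expectation onto the subalgebra
`B_λ = ⊕_i (I_{m i} ⊗ M_{d i}(ℂ))` of `M_ι(ℂ)`, where
`ι = Σ (i : Fin L), Fin (m i) × Fin (d i)`. -/
noncomputable def refinedPartitionCondExp {L : ℕ} (m d : Fin L → ℕ)
    (X : Matrix ((i : Fin L) × (Fin (m i) × Fin (d i)))
      ((i : Fin L) × (Fin (m i) × Fin (d i))) ℂ) :
    Matrix ((i : Fin L) × (Fin (m i) × Fin (d i)))
      ((i : Fin L) × (Fin (m i) × Fin (d i))) ℂ :=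
  Matrix.of fun x y =>
    if h : x.1 = y.1 then
      if (x.2.1 : ℕ) = (y.2.1 : ℕ) then
        (m x.1 : ℂ)⁻¹ * ∑ t : Fin (m x.1),
          X ⟨x.1, t, x.2.2⟩ ⟨x.1, t, Fin.cast (congrArg d h.symm) y.2.2⟩
      else 0
    else 0

/-!
Split a vector `v` into its restrictions `v_b` to the `r` diagonal blocks `b = (i, t)`. Writing
`X = BᴴB`, Cauchy–Schwarz for `‖B ·‖` gives `⟨v, X v⟩ ≤ r ∑_b ⟨v_b, X v_b⟩`. Copying `v_b` into the
blocks `(i, t')` of the same `i` and summing over `t'` gives `m i` times `⟨v_b, P_λ(X) v_b⟩`, and by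
positivity of `X` this sum dominates its term `⟨v_b, X v_b⟩`. As `m i ≤ ℓ`, this gives
`⟨v, X v⟩ ≤ r · ℓ · ‖P_λ X‖ · ‖v‖²`, i.e. `‖X‖ ≤ r · ℓ · ‖P_λ X‖`. Part (ii) is part (i) for
`XᴴX`, as `‖XᴴX‖ = ‖X‖²`.
-/

namespace Matrix

variable {𝕜 m n : Type*} [RCLike 𝕜] [Fintype m] [Fintype n]

lemma norm_toLp_sq_eq_re_star_dotProduct (v : n → 𝕜) :
    ‖(WithLp.toLp 2 v : EuclideanSpace 𝕜 n)‖ ^ 2 = RCLike.re (star v ⬝ᵥ v) := by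
  rw [← inner_self_eq_norm_sq (𝕜 := 𝕜), EuclideanSpace.inner_eq_star_dotProduct, dotProduct_comm]

lemma re_star_dotProduct_mulVec_le_opNorm [DecidableEq n] (A : Matrix n n 𝕜) (v : n → 𝕜) :
    RCLike.re (star v ⬝ᵥ A *ᵥ v) ≤ ‖A‖ * RCLike.re (star v ⬝ᵥ v) := by
  have hinner : star v ⬝ᵥ A *ᵥ v =
      inner 𝕜 (WithLp.toLp 2 v : EuclideanSpace 𝕜 n) (WithLp.toLp 2 (A *ᵥ v)) := by
    rw [EuclideanSpace.inner_eq_star_dotProduct, dotProduct_comm]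
  set w : EuclideanSpace 𝕜 n := WithLp.toLp 2 v
  calc RCLike.re (star v ⬝ᵥ A *ᵥ v)
      ≤ ‖w‖ * ‖(WithLp.toLp 2 (A *ᵥ v) : EuclideanSpace 𝕜 n)‖ := hinner ▸ re_inner_le_norm _ _
    _ ≤ ‖w‖ * (‖A‖ * ‖w‖) := mul_le_mul_of_nonneg_left (A.l2_opNorm_mulVec w) (norm_nonneg w)
    _ = ‖A‖ * RCLike.re (star v ⬝ᵥ v) := by rw [← norm_toLp_sq_eq_re_star_dotProduct]; ring

lemma re_star_dotProduct_conjTranspose_mul_self_mulVec (B : Matrix m n 𝕜) (v : n → 𝕜) :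
    RCLike.re (star v ⬝ᵥ (Bᴴ * B) *ᵥ v) =
      ‖(WithLp.toLp 2 (B *ᵥ v) : EuclideanSpace 𝕜 m)‖ ^ 2 := by
  rw [norm_toLp_sq_eq_re_star_dotProduct, ← mulVec_mulVec, dotProduct_mulVec, star_mulVec]

open scoped MatrixOrder in
lemma PosSemidef.exists_eq_conjTranspose_mul_self [DecidableEq n] {A : Matrix n n 𝕜}
    (hA : A.PosSemidef) : ∃ B : Matrix n n 𝕜, A = Bᴴ * B :=
  CStarAlgebra.nonneg_iff_eq_star_mul_self.mp hA.nonneg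

lemma PosSemidef.opNorm_le_of_re_star_dotProduct_mulVec_le [DecidableEq n] {A : Matrix n n 𝕜}
    (hA : A.PosSemidef) {c : ℝ} (hc : 0 ≤ c)
    (h : ∀ v, RCLike.re (star v ⬝ᵥ A *ᵥ v) ≤ c * RCLike.re (star v ⬝ᵥ v)) : ‖A‖ ≤ c := by
  obtain ⟨B, rfl⟩ := hA.exists_eq_conjTranspose_mul_self
  have hB : ‖B‖ ≤ √c := by
    refine ContinuousLinearMap.opNorm_le_bound _ (Real.sqrt_nonneg c) fun x => ?_
    rw [← Real.sqrt_sq (norm_nonneg _), ← Real.sqrt_sq (norm_nonneg x), ← Real.sqrt_mul hc]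
    refine Real.sqrt_le_sqrt ?_
    have hx := h x.ofLp
    rwa [re_star_dotProduct_conjTranspose_mul_self_mulVec,
      ← norm_toLp_sq_eq_re_star_dotProduct] at hx
  calc ‖Bᴴ * B‖ = ‖B‖ * ‖B‖ := l2_opNorm_conjTranspose_mul_self B
    _ ≤ √c * √c := mul_self_le_mul_self (norm_nonneg B) hB
    _ = c := Real.mul_self_sqrt hc

lemma PosSemidef.re_star_dotProduct_mulVec_sum_le [DecidableEq n] {β : Type*} [Fintype β]
    {A : Matrix n n 𝕜} (hA : A.PosSemidef) (f : β → n → 𝕜) :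
    RCLike.re (star (∑ b, f b) ⬝ᵥ A *ᵥ ∑ b, f b) ≤
      Fintype.card β * ∑ b, RCLike.re (star (f b) ⬝ᵥ A *ᵥ f b) := by
  obtain ⟨B, rfl⟩ := hA.exists_eq_conjTranspose_mul_self
  simp only [re_star_dotProduct_conjTranspose_mul_self_mulVec]
  rw [mulVec_sum, WithLp.toLp_sum]
  calc _ ≤ (∑ b, ‖(WithLp.toLp 2 (B *ᵥ f b) : EuclideanSpace 𝕜 n)‖) ^ 2 := by
        gcongr; exact norm_sum_le _ _
    _ ≤ _ := sq_sum_le_card_mul_sum_sq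

end Matrix

namespace RefinedPartition

variable {L : ℕ} (m d : Fin L → ℕ)

abbrev Index := (i : Fin L) × (Fin (m i) × Fin (d i))

abbrev Block := (i : Fin L) × Fin (m i)

def blockVec (i : Fin L) (t : Fin (m i)) (φ : Fin (d i) → ℂ) : Index m d → ℂ :=
  ∑ p, Pi.single ⟨i, t, p⟩ (φ p)

variable {m d}

lemma star_blockVec_dotProduct_mulVec (A : Matrix (Index m d) (Index m d) ℂ) (i : Fin L)
    (t : Fin (m i)) (φ : Fin (d i) → ℂ) :
    star (blockVec m d i t φ) ⬝ᵥ A *ᵥ blockVec m d i t φ =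
      ∑ p, ∑ q, star (φ p) * A ⟨i, t, p⟩ ⟨i, t, q⟩ * φ q := by
  simp only [blockVec, star_sum, Pi.star_single, mulVec_sum, mulVec_single, op_smul_eq_smul,
    dotProduct_sum, dotProduct_smul, sum_dotProduct, single_dotProduct, col_apply, smul_eq_mul,
    Finset.mul_sum]
  rw [Finset.sum_comm]
  exact Finset.sum_congr rfl fun _ _ => Finset.sum_congr rfl fun _ _ => by ring

lemma star_blockVec_dotProduct_blockVec (i : Fin L) (t : Fin (m i)) (φ : Fin (d i) → ℂ) :
    star (blockVec m d i t φ) ⬝ᵥ blockVec m d i t φ = ∑ p, star (φ p) * φ p := by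
  simpa [one_apply] using star_blockVec_dotProduct_mulVec 1 i t φ

lemma refinedPartitionCondExp_apply_block (X : Matrix (Index m d) (Index m d) ℂ) (i : Fin L)
    (t : Fin (m i)) (p q : Fin (d i)) :
    refinedPartitionCondExp m d X ⟨i, t, p⟩ ⟨i, t, q⟩ =
      (m i : ℂ)⁻¹ * ∑ t', X ⟨i, t', p⟩ ⟨i, t', q⟩ := by
  simp [refinedPartitionCondExp]

lemma star_blockVec_dotProduct_refinedPartitionCondExp_mulVec
    (X : Matrix (Index m d) (Index m d) ℂ) (i : Fin L) (t : Fin (m i)) (φ : Fin (d i) → ℂ) :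
    star (blockVec m d i t φ) ⬝ᵥ refinedPartitionCondExp m d X *ᵥ blockVec m d i t φ =
      (m i : ℂ)⁻¹ * ∑ t', star (blockVec m d i t' φ) ⬝ᵥ X *ᵥ blockVec m d i t' φ := by
  simp only [star_blockVec_dotProduct_mulVec, refinedPartitionCondExp_apply_block,
    Finset.mul_sum, Finset.sum_mul]
  conv_rhs => rw [Finset.sum_comm]
  refine Finset.sum_congr rfl fun p _ => ?_
  rw [Finset.sum_comm]
  exact Finset.sum_congr rfl fun _ _ => Finset.sum_congr rfl fun _ _ => by ring

lemma sum_block_sum_eq_sum {M : Type*} [AddCommMonoid M] (F : Index m d → M) :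
    ∑ b : Block m, ∑ p, F ⟨b.1, b.2, p⟩ = ∑ x, F x := by
  simp only [Fintype.sum_sigma, Fintype.sum_prod_type]

lemma sum_blockVec_eq (v : Index m d → ℂ) :
    ∑ b : Block m, blockVec m d b.1 b.2 (fun p => v ⟨b.1, b.2, p⟩) = v := by
  simp only [blockVec]
  rw [sum_block_sum_eq_sum fun x => Pi.single x (v x), Finset.univ_sum_single]

lemma re_star_blockVec_dotProduct_mulVec_le {X : Matrix (Index m d) (Index m d) ℂ}
    (hX : X.PosSemidef) (i : Fin L) (t : Fin (m i)) (φ : Fin (d i) → ℂ) :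
    RCLike.re (star (blockVec m d i t φ) ⬝ᵥ X *ᵥ blockVec m d i t φ) ≤
      m i * ‖refinedPartitionCondExp m d X‖ *
        RCLike.re (star (blockVec m d i t φ) ⬝ᵥ blockVec m d i t φ) := by
  have hnonneg : ∀ t', 0 ≤ RCLike.re (star (blockVec m d i t' φ) ⬝ᵥ X *ᵥ blockVec m d i t' φ) :=
    fun t' => (RCLike.nonneg_iff.mp (hX.dotProduct_mulVec_nonneg (blockVec m d i t' φ))).1
  have hmi : (m i : ℝ) ≠ 0 := Nat.cast_ne_zero.mpr t.pos.ne'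
  have hcondExp : RCLike.re (star (blockVec m d i t φ) ⬝ᵥ
      refinedPartitionCondExp m d X *ᵥ blockVec m d i t φ) =
      (m i : ℝ)⁻¹ * ∑ t', RCLike.re (star (blockVec m d i t' φ) ⬝ᵥ X *ᵥ blockVec m d i t' φ) := by
    rw [star_blockVec_dotProduct_refinedPartitionCondExp_mulVec, ← map_sum,
      ← RCLike.ofReal_natCast, ← RCLike.ofReal_inv, RCLike.re_ofReal_mul]
  calc RCLike.re (star (blockVec m d i t φ) ⬝ᵥ X *ᵥ blockVec m d i t φ)
      ≤ ∑ t', RCLike.re (star (blockVec m d i t' φ) ⬝ᵥ X *ᵥ blockVec m d i t' φ) :=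
        Finset.single_le_sum (fun t' _ => hnonneg t') (Finset.mem_univ t)
    _ = m i * RCLike.re (star (blockVec m d i t φ) ⬝ᵥ
          refinedPartitionCondExp m d X *ᵥ blockVec m d i t φ) := by
        rw [hcondExp, mul_inv_cancel_left₀ hmi]
    _ ≤ m i * (‖refinedPartitionCondExp m d X‖ *
          RCLike.re (star (blockVec m d i t φ) ⬝ᵥ blockVec m d i t φ)) := by
        gcongr
        exact re_star_dotProduct_mulVec_le_opNorm _ _
    _ = _ := by ring

lemma opNorm_le_mul_opNorm_refinedPartitionCondExp {X : Matrix (Index m d) (Index m d) ℂ}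
    (hX : X.PosSemidef) {c : ℕ} (hc : ∀ i, m i ≤ c) :
    ‖X‖ ≤ (∑ i, m i : ℕ) * c * ‖refinedPartitionCondExp m d X‖ := by
  refine hX.opNorm_le_of_re_star_dotProduct_mulVec_le (by positivity) fun v => ?_
  set f : Block m → Index m d → ℂ := fun b => blockVec m d b.1 b.2 fun p => v ⟨b.1, b.2, p⟩
  have hcard : Fintype.card (Block m) = ∑ i, m i := by simp
  have hnorm : ∑ b, RCLike.re (star (f b) ⬝ᵥ f b) = RCLike.re (star v ⬝ᵥ v) := by
    simp only [f, star_blockVec_dotProduct_blockVec, ← map_sum]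
    rw [sum_block_sum_eq_sum fun x => star (v x) * v x]
    rfl
  have hblock : ∀ b, RCLike.re (star (f b) ⬝ᵥ X *ᵥ f b) ≤
      c * ‖refinedPartitionCondExp m d X‖ * RCLike.re (star (f b) ⬝ᵥ f b) := fun b => by
    refine (re_star_blockVec_dotProduct_mulVec_le hX _ _ _).trans ?_
    have : 0 ≤ RCLike.re (star (f b) ⬝ᵥ f b) :=
      norm_toLp_sq_eq_re_star_dotProduct (f b) ▸ sq_nonneg _
    gcongr
    exact hc b.1
  calc RCLike.re (star v ⬝ᵥ X *ᵥ v) = RCLike.re (star (∑ b, f b) ⬝ᵥ X *ᵥ ∑ b, f b) := by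
        rw [sum_blockVec_eq]
    _ ≤ Fintype.card (Block m) * ∑ b, RCLike.re (star (f b) ⬝ᵥ X *ᵥ f b) :=
        hX.re_star_dotProduct_mulVec_sum_le f
    _ ≤ Fintype.card (Block m) *
          ∑ b, c * ‖refinedPartitionCondExp m d X‖ * RCLike.re (star (f b) ⬝ᵥ f b) := by
        gcongr with b
        exact hblock b
    _ = _ := by rw [← Finset.mul_sum, hnorm, hcard]; ring

end RefinedPartition

theorem refinedPartitionCondExp_opNorm_equivalence_general
    (L : ℕ) (m d : Fin L → ℕ)
    (hm : ∀ i, 1 ≤ m i)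
    (r ℓ : ℕ) (hr : r = ∑ i, m i) (hℓ : ℓ = Finset.univ.lcm m) :
    (∀ X : Matrix ((i : Fin L) × (Fin (m i) × Fin (d i)))
        ((i : Fin L) × (Fin (m i) × Fin (d i))) ℂ, X.PosSemidef →
      ‖refinedPartitionCondExp m d X‖ ≥ ((r : ℝ) * ℓ)⁻¹ * ‖X‖) ∧
    (∀ X : Matrix ((i : Fin L) × (Fin (m i) × Fin (d i)))
        ((i : Fin L) × (Fin (m i) × Fin (d i))) ℂ,
      Real.sqrt ‖refinedPartitionCondExp m d (Xᴴ * X)‖ ≥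
        (Real.sqrt ((r : ℝ) * ℓ))⁻¹ * ‖X‖) := by
  have hℓ_pos : 0 < ℓ := hℓ ▸ Nat.pos_of_ne_zero fun h => by
    obtain ⟨i, -, hi⟩ := Finset.lcm_eq_zero_iff.mp h
    exact Nat.one_le_iff_ne_zero.mp (hm i) hi
  have key : ∀ X, X.PosSemidef → ‖X‖ ≤ r * ℓ * ‖refinedPartitionCondExp m d X‖ := fun X hX => hr ▸
    RefinedPartition.opNorm_le_mul_opNorm_refinedPartitionCondExp hX fun i =>
      Nat.le_of_dvd hℓ_pos (hℓ ▸ Finset.dvd_lcm (Finset.mem_univ i))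
  refine ⟨fun X hX => inv_mul_le_of_le_mul₀ (by positivity) (norm_nonneg _) (key X hX),
    fun X => inv_mul_le_of_le_mul₀ (by positivity) (by positivity) ?_⟩
  have h := key _ (posSemidef_conjTranspose_mul_self X)
  rw [l2_opNorm_conjTranspose_mul_self] at h
  calc ‖X‖ = √(‖X‖ * ‖X‖) := (Real.sqrt_mul_self (norm_nonneg X)).symm
    _ ≤ √(r * ℓ * ‖refinedPartitionCondExp m d (Xᴴ * X)‖) := Real.sqrt_le_sqrt h
    _ = √(r * ℓ) * √‖refinedPartitionCondExp m d (Xᴴ * X)‖ := Real.sqrt_mul (by positivity) _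

/-- Equivalence constants for the conditional expectation onto
`B_λ = ⊕_i (I_{m i} ⊗ M_{d i}(ℂ))`: with `r = Σ_i m i` and `ℓ = lcm {m i}`,
(i) `‖P_λ X‖_op ≥ (1/(rℓ))·‖X‖_op` for positive semidefinite `X`, and
(ii) `√‖P_λ(XᴴX)‖_op ≥ (1/√(rℓ))·‖X‖_op` for all `X`. -/
theorem refinedPartitionCondExp_opNorm_equivalence
    (L : ℕ) (hL : 1 ≤ L) (m d : Fin L → ℕ)
    (hm : ∀ i, 1 ≤ m i) (hd : ∀ i, 1 ≤ d i)
    (r ℓ : ℕ) (hr : r = ∑ i, m i) (hℓ : ℓ = Finset.univ.lcm m) :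
    (∀ X : Matrix ((i : Fin L) × (Fin (m i) × Fin (d i)))
        ((i : Fin L) × (Fin (m i) × Fin (d i))) ℂ, X.PosSemidef →
      ‖refinedPartitionCondExp m d X‖ ≥ ((r : ℝ) * ℓ)⁻¹ * ‖X‖) ∧
    (∀ X : Matrix ((i : Fin L) × (Fin (m i) × Fin (d i)))
        ((i : Fin L) × (Fin (m i) × Fin (d i))) ℂ,
      Real.sqrt ‖refinedPartitionCondExp m d (Xᴴ * X)‖ ≥
        (Real.sqrt ((r : ℝ) * ℓ))⁻¹ * ‖X‖) :=
  refinedPartitionCondExp_opNorm_equivalence_general L m d hm r ℓ hr hℓ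
end

section
/- Let N ≥ 1 and for each k : Fin N let L_k ≥ 1, m_k, d_k : Fin L_k → ℕ with all values ≥ 1, index type ι_k = Σ (i : Fin L_k), Fin (m_k i) × Fin (d_k i), and conditional expectation P_{λ_k} : M_{ι_k}(ℂ) → M_{ι_k}(ℂ) defined by (P_{λ_k} X)(⟨i,s,p⟩, ⟨i',s',q⟩) = (1/m_k(i))·Σ_t X(⟨i,t,p⟩, ⟨i,t,q⟩) if i = i' and s = s', and 0 otherwise. Let A = Π_{k} M_{ι_k}(ℂ) with componentwise operations and the supremum norm, and let P : A → A act componentwise by the P_{λ_k}. Set r = lcm{r_k : k}, where r_k = Σ_i m_k(i), and ℓ = lcm{m_k(i) : k, i}. Then: (i) if X ∈ A has every component positive semidefinite, then ‖P(X)‖ ≥ (1/(r·ℓ))·‖X‖; and (ii) for every X ∈ A, √‖P(X*X)‖ ≥ (1/√(r·ℓ))·‖X‖, where X* is the componentwise conjugate transpose. -/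
open Matrix
open scoped Matrix.Norms.L2Operator ComplexOrder

/-!
Let `n = Σ_j m j` be the number of blocks `(j, s)` of the refined index type. Writing `X = S * S`
with `S = √X`, Cauchy–Schwarz over these blocks gives `X ≤ n • ⊕_{j,s} X_{(j,s),(j,s)}`. The matrix
`P X` is block diagonal with `(j, s)` block the average `(m j)⁻¹ Σ_t X_{(j,t),(j,t)}`, which for
positive `X` dominates `(m j)⁻¹ X_{(j,s),(j,s)}`. Hence `X ≤ (n · max_j m j) • P X` in the Loewner
order, and the norm is monotone on positive elements of a C⋆-algebra; in every component `k` we have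
`n ≤ r` and `m j ≤ ℓ`. Part (ii) is part (i) for `X* X` together with the C⋆-identity.
-/

open scoped MatrixOrder

namespace Matrix

variable {n 𝕜 : Type*} [Fintype n] [RCLike 𝕜]

lemma star_sum_single_dotProduct_mulVec_sum_single [DecidableEq n] {α : Type*} [Fintype α]
    (X : Matrix n n 𝕜) (f : α → n) (w : α → 𝕜) :
    star (∑ a, Pi.single (f a) (w a)) ⬝ᵥ X *ᵥ ∑ a, Pi.single (f a) (w a)
      = star w ⬝ᵥ X.submatrix f f *ᵥ w := by
  simp only [star_sum, mulVec_sum, sum_dotProduct, dotProduct_sum, mulVec_single,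
    ← Pi.single_star, single_dotProduct]
  simp only [RCLike.star_def, Pi.smul_apply, col_apply, MulOpposite.smul_eq_mul_unop,
    MulOpposite.unop_op, dotProduct, Pi.star_apply, mulVec, submatrix_apply, Finset.mul_sum]
  exact Finset.sum_comm

lemma PosSemidef.re_dotProduct_mulVec_sum_le {X : Matrix n n 𝕜} (hX : X.PosSemidef)
    {β : Type*} (s : Finset β) (w : β → n → 𝕜) :
    RCLike.re (star (∑ b ∈ s, w b) ⬝ᵥ X *ᵥ ∑ b ∈ s, w b)
      ≤ s.card * ∑ b ∈ s, RCLike.re (star (w b) ⬝ᵥ X *ᵥ w b) := by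
  classical
  set S := CFC.sqrt X
  have hS : Sᴴ * S = X := by
    rw [(CFC.sqrt_nonneg X).posSemidef.isHermitian.eq]
    exact CFC.sqrt_mul_sqrt_self X hX.nonneg
  have hq : ∀ u, RCLike.re (star u ⬝ᵥ X *ᵥ u) = ‖WithLp.toLp 2 (S *ᵥ u)‖ ^ 2 := by
    intro u
    rw [← hS, ← mulVec_mulVec, dotProduct_mulVec, ← star_mulVec, EuclideanSpace.norm_sq_eq]
    simp only [dotProduct, Pi.star_apply, RCLike.star_def, RCLike.conj_mul, map_sum]
    norm_cast
  simp only [hq]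
  simp only [mulVec_sum, WithLp.toLp_sum]
  calc ‖∑ b ∈ s, WithLp.toLp 2 (S *ᵥ w b)‖ ^ 2
      ≤ (∑ b ∈ s, ‖WithLp.toLp 2 (S *ᵥ w b)‖) ^ 2 := by gcongr; exact norm_sum_le _ _
    _ ≤ _ := sq_sum_le_card_mul_sum_sq

lemma le_of_re_dotProduct_mulVec_le {A B : Matrix n n 𝕜} (hA : A.IsHermitian)
    (hB : B.IsHermitian)
    (h : ∀ v, RCLike.re (star v ⬝ᵥ A *ᵥ v) ≤ RCLike.re (star v ⬝ᵥ B *ᵥ v)) : A ≤ B := by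
  refine le_iff.mpr (.of_dotProduct_mulVec_nonneg (hB.sub hA) fun v => ?_)
  rw [RCLike.nonneg_iff, sub_mulVec, dotProduct_sub, map_sub, map_sub, sub_nonneg,
    hA.im_star_dotProduct_mulVec_self, hB.im_star_dotProduct_mulVec_self, sub_zero]
  exact ⟨h v, rfl⟩

end Matrix

lemma sum_diag_le_of_card_le {k C : ℕ} (hC : k ≤ C) (G : Fin k → Fin k → ℝ)
    (hG : ∀ s t, 0 ≤ G s t) : ∑ s, G s s ≤ C * ((k : ℝ)⁻¹ * ∑ s, ∑ t, G s t) := by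
  rcases Nat.eq_zero_or_pos k with rfl | hk
  · simp
  calc ∑ s, G s s ≤ ∑ s, ∑ t, G s t :=
        Finset.sum_le_sum fun s _ => Finset.single_le_sum (fun t _ => hG s t) (Finset.mem_univ s)
    _ = k * ((k : ℝ)⁻¹ * ∑ s, ∑ t, G s t) := by field_simp
    _ ≤ C * ((k : ℝ)⁻¹ * ∑ s, ∑ t, G s t) := by
        gcongr
        exact mul_nonneg (by positivity)
          (Finset.sum_nonneg fun s _ => Finset.sum_nonneg fun t _ => hG s t)

section RefinedPartition

variable {L : ℕ} {m d : Fin L → ℕ}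

lemma refinedPartitionCondExp_conjTranspose
    (X : Matrix ((i : Fin L) × (Fin (m i) × Fin (d i)))
      ((i : Fin L) × (Fin (m i) × Fin (d i))) ℂ) :
    (refinedPartitionCondExp m d X)ᴴ = refinedPartitionCondExp m d Xᴴ := by
  ext ⟨i, s, p⟩ ⟨j, t, q⟩
  by_cases h : i = j
  · subst h
    by_cases hst : s = t
    · subst hst
      simp [refinedPartitionCondExp]
    · simp [refinedPartitionCondExp, Fin.val_eq_val, hst, Ne.symm hst]
  · simp [refinedPartitionCondExp, h, Ne.symm h]

lemma refinedPartitionCondExp_mulVec_apply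
    (X : Matrix ((i : Fin L) × (Fin (m i) × Fin (d i)))
      ((i : Fin L) × (Fin (m i) × Fin (d i))) ℂ)
    (v : (i : Fin L) × (Fin (m i) × Fin (d i)) → ℂ) (j : Fin L) (s : Fin (m j))
    (p : Fin (d j)) :
    (refinedPartitionCondExp m d X *ᵥ v) ⟨j, s, p⟩ = (m j : ℂ)⁻¹ * ∑ t,
      (X.submatrix (Sigma.mk j ∘ Prod.mk t) (Sigma.mk j ∘ Prod.mk t) *ᵥ
        (v ∘ Sigma.mk j ∘ Prod.mk s)) p := by
  simp only [mulVec, dotProduct, Fintype.sum_sigma, Fintype.sum_prod_type]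
  rw [Finset.sum_eq_single j
    (fun j' _ hj' => by simp [refinedPartitionCondExp, Ne.symm hj']) (by simp)]
  simp only [refinedPartitionCondExp, Finset.mul_sum, of_apply, ↓reduceDIte, Fin.val_eq_val,
    Fin.cast_eq_self, ite_mul, Finset.sum_mul, mul_assoc, zero_mul, Finset.sum_ite_irrel,
    Finset.sum_const_zero, Finset.sum_ite_eq, Finset.mem_univ, ↓reduceIte, submatrix_apply,
    Function.comp_apply]
  exact Finset.sum_comm

lemma star_dotProduct_refinedPartitionCondExp_mulVec
    (X : Matrix ((i : Fin L) × (Fin (m i) × Fin (d i)))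
      ((i : Fin L) × (Fin (m i) × Fin (d i))) ℂ)
    (v : (i : Fin L) × (Fin (m i) × Fin (d i)) → ℂ) :
    star v ⬝ᵥ refinedPartitionCondExp m d X *ᵥ v = ∑ j, (m j : ℂ)⁻¹ * ∑ s, ∑ t,
      star (v ∘ Sigma.mk j ∘ Prod.mk s) ⬝ᵥ
        X.submatrix (Sigma.mk j ∘ Prod.mk t) (Sigma.mk j ∘ Prod.mk t) *ᵥ
          (v ∘ Sigma.mk j ∘ Prod.mk s) := by
  simp only [dotProduct, Fintype.sum_sigma, Fintype.sum_prod_type,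
    refinedPartitionCondExp_mulVec_apply, Finset.mul_sum]
  refine Finset.sum_congr rfl fun j _ => Finset.sum_congr rfl fun s _ => ?_
  rw [Finset.sum_comm]
  simp only [Pi.star_apply, Function.comp_apply, mul_left_comm]

lemma le_nsmul_refinedPartitionCondExp {C : ℕ} (hC : ∀ i, m i ≤ C)
    {X : Matrix ((i : Fin L) × (Fin (m i) × Fin (d i)))
      ((i : Fin L) × (Fin (m i) × Fin (d i))) ℂ}
    (hX : X.PosSemidef) : X ≤ ((∑ i, m i) * C) • refinedPartitionCondExp m d X := by
  have hP : (refinedPartitionCondExp m d X).IsHermitian := by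
    rw [IsHermitian, refinedPartitionCondExp_conjTranspose, hX.isHermitian.eq]
  refine le_of_re_dotProduct_mulVec_le hX.isHermitian (hP.smul (.all _)) fun v => ?_
  set q : (j : Fin L) → Fin (m j) → Fin (m j) → ℝ := fun j s t =>
    RCLike.re (star (v ∘ Sigma.mk j ∘ Prod.mk s) ⬝ᵥ
      X.submatrix (Sigma.mk j ∘ Prod.mk t) (Sigma.mk j ∘ Prod.mk t) *ᵥ
        (v ∘ Sigma.mk j ∘ Prod.mk s))
  have hq : ∀ j s t, 0 ≤ q j s t := fun j s t => (hX.submatrix _).re_dotProduct_nonneg _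
  have hv : ∑ b : (j : Fin L) × Fin (m j), ∑ p,
      Pi.single ⟨b.1, b.2, p⟩ (v ⟨b.1, b.2, p⟩) = v := by
    conv_rhs => rw [← Finset.univ_sum_single v]
    simp only [Fintype.sum_sigma, Fintype.sum_prod_type]
  calc RCLike.re (star v ⬝ᵥ X *ᵥ v)
      ≤ (Finset.univ : Finset ((j : Fin L) × Fin (m j))).card * ∑ b : (j : Fin L) × Fin (m j),
          RCLike.re (star (∑ p, Pi.single ⟨b.1, b.2, p⟩ (v ⟨b.1, b.2, p⟩)) ⬝ᵥ
            X *ᵥ ∑ p, Pi.single ⟨b.1, b.2, p⟩ (v ⟨b.1, b.2, p⟩)) := by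
        conv_lhs => rw [← hv]
        exact hX.re_dotProduct_mulVec_sum_le _ _
    _ = (∑ i, m i : ℕ) * ∑ j, ∑ s, q j s s := by
        simp only [Finset.card_univ, Fintype.card_sigma, Fintype.card_fin, Fintype.sum_sigma,
          star_sum_single_dotProduct_mulVec_sum_single]
        rfl
    _ ≤ (∑ i, m i : ℕ) * ∑ j, C * ((m j : ℝ)⁻¹ * ∑ s, ∑ t, q j s t) := by
        gcongr with j
        exact sum_diag_le_of_card_le (hC j) _ fun s t => hq j s t
    _ = RCLike.re (star v ⬝ᵥ (((∑ i, m i) * C) • refinedPartitionCondExp m d X) *ᵥ v) := by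
        rw [smul_mulVec, dotProduct_smul, star_dotProduct_refinedPartitionCondExp_mulVec]
        simp [q, nsmul_eq_mul, Finset.mul_sum, mul_assoc]

lemma norm_le_mul_norm_refinedPartitionCondExp {C : ℕ} (hC : ∀ i, m i ≤ C)
    {X : Matrix ((i : Fin L) × (Fin (m i) × Fin (d i)))
      ((i : Fin L) × (Fin (m i) × Fin (d i))) ℂ}
    (hX : X.PosSemidef) : ‖X‖ ≤ (∑ i, m i : ℕ) * C * ‖refinedPartitionCondExp m d X‖ := by
  calc ‖X‖ ≤ ‖((∑ i, m i) * C) • refinedPartitionCondExp m d X‖ :=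
        CStarAlgebra.norm_le_norm_of_nonneg_of_le hX.nonneg
          (le_nsmul_refinedPartitionCondExp hC hX)
    _ = _ := by rw [RCLike.norm_nsmul ℂ, nsmul_eq_mul]; push_cast; ring

end RefinedPartition

lemma pi_norm_le_mul_norm_refinedPartitionCondExp {κ : Type*} [Fintype κ] {L : κ → ℕ}
    {m d : (k : κ) → Fin (L k) → ℕ} {R C : ℕ} (hR : ∀ k, ∑ i, m k i ≤ R)
    (hC : ∀ k i, m k i ≤ C)
    {X : (k : κ) → Matrix ((i : Fin (L k)) × (Fin (m k i) × Fin (d k i)))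
      ((i : Fin (L k)) × (Fin (m k i) × Fin (d k i))) ℂ} (hX : ∀ k, (X k).PosSemidef) :
    ‖X‖ ≤ R * C * ‖fun k => refinedPartitionCondExp (m k) (d k) (X k)‖ := by
  refine (pi_norm_le_iff_of_nonneg (by positivity)).mpr fun k => ?_
  calc ‖X k‖ ≤ (∑ i, m k i : ℕ) * C * ‖refinedPartitionCondExp (m k) (d k) (X k)‖ :=
        norm_le_mul_norm_refinedPartitionCondExp (hC k) (hX k)
    _ ≤ R * C * ‖fun k => refinedPartitionCondExp (m k) (d k) (X k)‖ := by
        gcongr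
        · exact hR k
        · exact norm_le_pi_norm (fun k => refinedPartitionCondExp (m k) (d k) (X k)) k

theorem directSum_refinedPartitionCondExp_opNorm_equivalence_general
    (N : ℕ) (L : Fin N → ℕ)
    (m d : (k : Fin N) → Fin (L k) → ℕ)
    (P : ((k : Fin N) → Matrix ((i : Fin (L k)) × (Fin (m k i) × Fin (d k i)))
        ((i : Fin (L k)) × (Fin (m k i) × Fin (d k i))) ℂ) →
      ((k : Fin N) → Matrix ((i : Fin (L k)) × (Fin (m k i) × Fin (d k i)))
        ((i : Fin (L k)) × (Fin (m k i) × Fin (d k i))) ℂ))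
    (hP : ∀ X k, P X k = refinedPartitionCondExp (m k) (d k) (X k))
    (r ℓ : ℕ)
    (hr : r = Finset.univ.lcm fun k => ∑ i, m k i)
    (hℓ : ℓ = Finset.univ.lcm fun k => Finset.univ.lcm (m k)) :
    (∀ X : (k : Fin N) → Matrix ((i : Fin (L k)) × (Fin (m k i) × Fin (d k i)))
        ((i : Fin (L k)) × (Fin (m k i) × Fin (d k i))) ℂ,
      (∀ k, (X k).PosSemidef) → ‖P X‖ ≥ ((r : ℝ) * ℓ)⁻¹ * ‖X‖) ∧
    (∀ X : (k : Fin N) → Matrix ((i : Fin (L k)) × (Fin (m k i) × Fin (d k i)))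
        ((i : Fin (L k)) × (Fin (m k i) × Fin (d k i))) ℂ,
      Real.sqrt ‖P (fun k => (X k)ᴴ * X k)‖ ≥ (Real.sqrt ((r : ℝ) * ℓ))⁻¹ * ‖X‖) := by
  have hPX : ∀ X, P X = fun k => refinedPartitionCondExp (m k) (d k) (X k) :=
    fun X => funext (hP X)
  rcases eq_or_ne ((r : ℝ) * ℓ) 0 with h0 | h0
  · -- the constants are then `0⁻¹ = 0`
    simp [h0]
  have hrℓ : 0 < (r : ℝ) * ℓ := lt_of_le_of_ne (by positivity) h0.symm
  obtain ⟨hr0, hℓ0⟩ : r ≠ 0 ∧ ℓ ≠ 0 := by simpa [not_or] using h0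
  have hR : ∀ k, ∑ i, m k i ≤ r := fun k =>
    Nat.le_of_dvd (Nat.pos_of_ne_zero hr0) (hr ▸ Finset.dvd_lcm (Finset.mem_univ k))
  have hC : ∀ k i, m k i ≤ ℓ := fun k i => Nat.le_of_dvd (Nat.pos_of_ne_zero hℓ0)
    ((Finset.dvd_lcm (Finset.mem_univ i)).trans (hℓ ▸ Finset.dvd_lcm (Finset.mem_univ k)))
  refine ⟨fun X hX => ?_, fun X => ?_⟩
  · rw [ge_iff_le, inv_mul_le_iff₀ hrℓ, hPX]
    exact pi_norm_le_mul_norm_refinedPartitionCondExp hR hC hX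
  · have hXX : ‖X‖ * ‖X‖ = ‖fun k => (X k)ᴴ * X k‖ := by
      rw [← CStarRing.norm_star_mul_self]; rfl
    rw [ge_iff_le, inv_mul_le_iff₀ (Real.sqrt_pos.mpr hrℓ), ← Real.sqrt_mul hrℓ.le,
      Real.le_sqrt (norm_nonneg _) (mul_nonneg hrℓ.le (norm_nonneg _)), sq, hXX, hPX]
    exact pi_norm_le_mul_norm_refinedPartitionCondExp hR hC fun k =>
      posSemidef_conjTranspose_mul_self (X k)

/-- Equivalence constants on the direct sum `A = Π_k M_{ι_k}(ℂ)` (with the sup norm) for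
the componentwise conditional expectation onto `⊕_k B_{λ_k}`: with
`r = lcm_k (Σ_i m_k i)` and `ℓ = lcm_{k,i} (m_k i)`,
(i) `‖P X‖ ≥ (1/(rℓ))·‖X‖` whenever every component of `X` is positive semidefinite, and
(ii) `√‖P (X*X)‖ ≥ (1/√(rℓ))·‖X‖` for all `X`. -/
theorem directSum_refinedPartitionCondExp_opNorm_equivalence
    (N : ℕ) (hN : 1 ≤ N) (L : Fin N → ℕ) (hL : ∀ k, 1 ≤ L k)
    (m d : (k : Fin N) → Fin (L k) → ℕ)
    (hm : ∀ k i, 1 ≤ m k i) (hd : ∀ k i, 1 ≤ d k i)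
    (P : ((k : Fin N) → Matrix ((i : Fin (L k)) × (Fin (m k i) × Fin (d k i)))
        ((i : Fin (L k)) × (Fin (m k i) × Fin (d k i))) ℂ) →
      ((k : Fin N) → Matrix ((i : Fin (L k)) × (Fin (m k i) × Fin (d k i)))
        ((i : Fin (L k)) × (Fin (m k i) × Fin (d k i))) ℂ))
    (hP : ∀ X k, P X k = refinedPartitionCondExp (m k) (d k) (X k))
    (r ℓ : ℕ)
    (hr : r = Finset.univ.lcm fun k => ∑ i, m k i)
    (hℓ : ℓ = Finset.univ.lcm fun k => Finset.univ.lcm (m k)) :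
    (∀ X : (k : Fin N) → Matrix ((i : Fin (L k)) × (Fin (m k i) × Fin (d k i)))
        ((i : Fin (L k)) × (Fin (m k i) × Fin (d k i))) ℂ,
      (∀ k, (X k).PosSemidef) → ‖P X‖ ≥ ((r : ℝ) * ℓ)⁻¹ * ‖X‖) ∧
    (∀ X : (k : Fin N) → Matrix ((i : Fin (L k)) × (Fin (m k i) × Fin (d k i)))
        ((i : Fin (L k)) × (Fin (m k i) × Fin (d k i))) ℂ,
      Real.sqrt ‖P (fun k => (X k)ᴴ * X k)‖ ≥ (Real.sqrt ((r : ℝ) * ℓ))⁻¹ * ‖X‖) :=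
  directSum_refinedPartitionCondExp_opNorm_equivalence_general N L m d P hP r ℓ hr hℓ
end

section
/- Let n, L ≥ 1 and b : Fin n → Fin L, with pinching map P_b. Then the map N : M_n(ℂ) → ℝ defined by N(A) = √‖P_b(AᴴA)‖_op is a norm on M_n(ℂ): (i) N(A) = 0 if and only if A = 0; (ii) N(c·A) = |c|·N(A) for all c ∈ ℂ and A ∈ M_n(ℂ); (iii) N(A + B) ≤ N(A) + N(B) for all A, B ∈ M_n(ℂ). -/
/-!
Let `D_l` be the diagonal projection onto the coordinates `k` with `b k = l`. Stacking the
column blocks `A D_l` into one tall matrix `S A` gives a linear injection with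
`(S A)ᴴ (S A) = ∑ₗ D_l Aᴴ A D_l = P_b (Aᴴ A)`. By the C⋆-identity `‖Xᴴ X‖ = ‖X‖²` for the
operator norm, `N A = ‖S A‖`, so `N` is the operator norm pulled back along an injective
linear map, hence a norm.
-/

open Matrix
open scoped Matrix.Norms.L2Operator

namespace Matrix

variable {ι m n : Type*} [DecidableEq ι]

def blockStack {R : Type*} [Zero R] (b : n → ι) (A : Matrix m n R) : Matrix (ι × m) n R :=
  of fun p k => if b k = p.1 then A p.2 k else 0

theorem blockStack_add {R : Type*} [AddZeroClass R] (b : n → ι) (A B : Matrix m n R) :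
    blockStack b (A + B) = blockStack b A + blockStack b B := by
  ext p k
  simp only [blockStack, of_apply, add_apply]
  split_ifs <;> simp

theorem blockStack_smul {R S : Type*} [Zero R] [SMulZeroClass S R] (b : n → ι) (c : S)
    (A : Matrix m n R) : blockStack b (c • A) = c • blockStack b A := by
  ext p k
  simp only [blockStack, of_apply, smul_apply]
  split_ifs <;> simp

theorem blockStack_eq_zero_iff {R : Type*} [Zero R] (b : n → ι) (A : Matrix m n R) :
    blockStack b A = 0 ↔ A = 0 := by
  refine ⟨fun h => ?_, fun h => ?_⟩
  · ext i k
    simpa [blockStack] using congrFun (congrFun h (b k, i)) k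
  · ext p k
    simp [blockStack, h]

theorem conjTranspose_blockStack_mul_self {R : Type*} [Fintype ι] [Fintype m]
    [NonUnitalNonAssocSemiring R] [StarAddMonoid R] (b : n → ι) (A : Matrix m n R) :
    (blockStack b A)ᴴ * blockStack b A =
      of fun j k => if b j = b k then (Aᴴ * A) j k else 0 := by
  ext j k
  simp only [blockStack, of_apply, mul_apply, conjTranspose_apply]
  rw [Fintype.sum_prod_type, Finset.sum_comm]
  simp only [apply_ite star, star_zero, ite_mul, zero_mul, mul_ite, mul_zero,
    Finset.sum_ite_eq, Finset.mem_univ, if_true]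
  split_ifs <;> simp

theorem l2_opNorm_blockStack {𝕜 : Type*} [RCLike 𝕜] [Fintype ι] [Fintype m] [Fintype n]
    [DecidableEq n] (b : n → ι) (A : Matrix m n 𝕜) :
    ‖blockStack b A‖ =
      √‖(of fun j k => if b j = b k then (Aᴴ * A) j k else 0 : Matrix n n 𝕜)‖ := by
  rw [← conjTranspose_blockStack_mul_self, l2_opNorm_conjTranspose_mul_self,
    Real.sqrt_mul_self (norm_nonneg _)]

end Matrix

theorem frobeniusRieffel_is_norm_general
    (n L : ℕ) (b : Fin n → Fin L)
    (P : Matrix (Fin n) (Fin n) ℂ → Matrix (Fin n) (Fin n) ℂ)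
    (hP : ∀ X, P X = Matrix.of fun j k => if b j = b k then X j k else 0)
    (N : Matrix (Fin n) (Fin n) ℂ → ℝ)
    (hN : ∀ A, N A = Real.sqrt ‖P (Aᴴ * A)‖) :
    (∀ A : Matrix (Fin n) (Fin n) ℂ, N A = 0 ↔ A = 0) ∧
    (∀ (c : ℂ) (A : Matrix (Fin n) (Fin n) ℂ), N (c • A) = ‖c‖ * N A) ∧
    (∀ A B : Matrix (Fin n) (Fin n) ℂ, N (A + B) ≤ N A + N B) := by
  have hN_stack : ∀ A, N A = ‖blockStack b A‖ := fun A => by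
    rw [hN, hP, l2_opNorm_blockStack]
  refine ⟨fun A => ?_, fun c A => ?_, fun A B => ?_⟩
  · rw [hN_stack, norm_eq_zero, blockStack_eq_zero_iff]
  · rw [hN_stack, hN_stack, blockStack_smul, norm_smul]
  · simpa only [hN_stack, blockStack_add] using norm_add_le _ _

/-- The Frobenius–Rieffel norm `N(A) = √‖P_b(AᴴA)‖_op` associated to the pinching onto the
block-diagonal subalgebra determined by `b` is a norm on `M_n(ℂ)`. -/
theorem frobeniusRieffel_is_norm
    (n L : ℕ) (hn : 1 ≤ n) (hL : 1 ≤ L) (b : Fin n → Fin L)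
    (P : Matrix (Fin n) (Fin n) ℂ → Matrix (Fin n) (Fin n) ℂ)
    (hP : ∀ X, P X = Matrix.of fun j k => if b j = b k then X j k else 0)
    (N : Matrix (Fin n) (Fin n) ℂ → ℝ)
    (hN : ∀ A, N A = Real.sqrt ‖P (Aᴴ * A)‖) :
    (∀ A : Matrix (Fin n) (Fin n) ℂ, N A = 0 ↔ A = 0) ∧
    (∀ (c : ℂ) (A : Matrix (Fin n) (Fin n) ℂ), N (c • A) = ‖c‖ * N A) ∧
    (∀ A B : Matrix (Fin n) (Fin n) ℂ, N (A + B) ≤ N A + N B) :=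
  frobeniusRieffel_is_norm_general n L b P hP N hN
end

section
/- Fix N ≥ 2. For an irrational θ ∈ (0,1), let r_k(θ) (k ≥ 1) be the partial denominators of the continued fraction expansion of θ, and let p_k(θ), q_k(θ) be the numerators and denominators of its convergents. Define c_N(θ) = (θ·q_N(θ) − p_N(θ)) / ((θ·q_{N−2}(θ) − p_{N−2}(θ))·r_N(θ)·(r_N(θ)+1)²). If (θ_j) is a sequence of irrationals in (0,1) converging to an irrational θ ∈ (0,1), then c_N(θ_j) → c_N(θ) as j → ∞. -/
/-! Near an irrational `θ` the Gauss map `x ↦ (fract x)⁻¹` is continuous and its iterates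
avoid the integers, so `⌊x⌋` and the first partial denominators of every `x` close to `θ`
(rational or not) coincide with those of `θ`. On a neighbourhood of `θ` the data `p_k`, `q_k`,
`r_N` are therefore constant, and `c_N` is a rational function of `x` whose denominator does not
vanish at `θ`: `θ q_{N-2} - p_{N-2} ≠ 0` because `θ` is irrational, and `r_N ≥ 1`. -/

/-- `k`-th convergent numerator `p_k(θ)` of the continued fraction expansion of `θ`. -/
noncomputable def cfNum (θ : ℝ) (k : ℕ) : ℝ := (GenContFract.of θ).nums k

/-- `k`-th convergent denominator `q_k(θ)` of the continued fraction expansion of `θ`. -/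
noncomputable def cfDen (θ : ℝ) (k : ℕ) : ℝ := (GenContFract.of θ).dens k

/-- `k`-th partial denominator `r_k(θ)` (for `k ≥ 1`) of the continued fraction
expansion of `θ`. -/
noncomputable def cfPartDen (θ : ℝ) (k : ℕ) : ℝ :=
  ((GenContFract.of θ).partDens.get? (k - 1)).getD 0

/-- The square of the equivalence constant between the operator norm and the
Frobenius–Rieffel norm on the `N`-th finite-dimensional algebra of the Effros–Shen
AF algebra with parameter `θ`. -/
noncomputable def effrosShenConst (N : ℕ) (θ : ℝ) : ℝ :=
  (θ * cfDen θ N - cfNum θ N) /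
    ((θ * cfDen θ (N - 2) - cfNum θ (N - 2)) * cfPartDen θ N * (cfPartDen θ N + 1) ^ 2)

open Filter Topology GenContFract

theorem eventually_floor_eq {α : Type*} [Ring α] [LinearOrder α] [IsStrictOrderedRing α]
    [FloorRing α] [TopologicalSpace α] [OrderTopology α] {x : α} (h : x ≠ ⌊x⌋) :
    ∀ᶠ y in 𝓝 x, ⌊y⌋ = ⌊x⌋ :=
  mem_of_superset
    (Ioo_mem_nhds ((Int.floor_le x).lt_of_ne h.symm) (Int.lt_floor_add_one x)) fun _ hy =>
      Int.floor_eq_iff.2 ⟨hy.1.le, hy.2⟩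

theorem Irrational.fract {x : ℝ} (hx : Irrational x) : Irrational (Int.fract x) := by
  rw [← Int.self_sub_floor]
  exact hx.sub_intCast ⌊x⌋

theorem continuousAt_fract_inv {x : ℝ} (hx : Irrational x) :
    ContinuousAt (fun y => (Int.fract y)⁻¹) x :=
  (continuousAt_fract (hx.ne_int _)).inv₀ hx.fract.ne_zero

namespace GenContFract

theorem conts_eq_of_s_get?_eq {K : Type*} [DivisionRing K] {g g' : GenContFract K}
    (hh : g.h = g'.h) {n : ℕ} (hs : ∀ i < n, g.s.get? i = g'.s.get? i) :
    g.conts n = g'.conts n := by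
  suffices h : ∀ k ≤ n,
      g.contsAux k = g'.contsAux k ∧ g.contsAux (k + 1) = g'.contsAux (k + 1) from
    (h n le_rfl).2
  intro k hk
  induction k with
  | zero => exact ⟨rfl, by simp only [contsAux, hh]⟩
  | succ k ih =>
    obtain ⟨h₀, h₁⟩ := ih (by omega)
    refine ⟨h₁, ?_⟩
    rw [contsAux, contsAux, hs k (by omega), h₀, h₁]

theorem eventually_of_s_get?_eq {v : ℝ} (hv : Irrational v) (n : ℕ) :
    ∀ᶠ x in 𝓝 v, (GenContFract.of x).s.get? n = (GenContFract.of v).s.get? n := by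
  induction n generalizing v with
  | zero =>
    filter_upwards [(continuousAt_fract (hv.ne_int _)).eventually_ne hv.fract.ne_zero,
      (continuousAt_fract_inv hv).eventually (eventually_floor_eq (hv.fract.inv.ne_int _))]
      with x hx hfloor
    exact (of_s_head hx).trans (hfloor ▸ (of_s_head hv.fract.ne_zero).symm)
  | succ n ih =>
    filter_upwards [(continuousAt_fract_inv hv).eventually (ih hv.fract.inv)] with x hx
    rw [of_s_succ, of_s_succ, hx]

theorem eventually_of_conts_eq {v : ℝ} (hv : Irrational v) (n : ℕ) :
    ∀ᶠ x in 𝓝 v, (GenContFract.of x).conts n = (GenContFract.of v).conts n := by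
  have hh : ∀ᶠ x in 𝓝 v, (GenContFract.of x).h = (GenContFract.of v).h :=
    (eventually_floor_eq (hv.ne_int _)).mono fun x hx => by rw [of_h_eq_floor, of_h_eq_floor, hx]
  have hs : ∀ᶠ x in 𝓝 v, ∀ i ∈ Finset.range n,
      (GenContFract.of x).s.get? i = (GenContFract.of v).s.get? i :=
    (eventually_all_finset _).2 fun i _ => eventually_of_s_get?_eq hv i
  filter_upwards [hh, hs] with x hxh hxs
  exact conts_eq_of_s_get?_eq hxh fun i hi => hxs i (Finset.mem_range.2 hi)

end GenContFract

theorem one_le_cfDen (θ : ℝ) (k : ℕ) : 1 ≤ cfDen θ k := by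
  induction k with
  | zero => exact zeroth_den_eq_one.ge
  | succ k ih => exact ih.trans of_den_mono

section ContinuedFractionData

variable {θ : ℝ}

theorem eventually_cfNum_eq (hθ : Irrational θ) (k : ℕ) :
    ∀ᶠ x in 𝓝 θ, cfNum x k = cfNum θ k :=
  (eventually_of_conts_eq hθ k).mono fun x hx => by simp only [cfNum, num_eq_conts_a, hx]

theorem eventually_cfDen_eq (hθ : Irrational θ) (k : ℕ) :
    ∀ᶠ x in 𝓝 θ, cfDen x k = cfDen θ k :=
  (eventually_of_conts_eq hθ k).mono fun x hx => by simp only [cfDen, den_eq_conts_b, hx]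

theorem eventually_cfPartDen_eq (hθ : Irrational θ) (k : ℕ) :
    ∀ᶠ x in 𝓝 θ, cfPartDen x k = cfPartDen θ k :=
  (eventually_of_s_get?_eq hθ (k - 1)).mono fun x hx => by
    simp only [cfPartDen, partDens, Stream'.Seq.map_get?, hx]

theorem one_le_cfPartDen (hθ : Irrational θ) (k : ℕ) : 1 ≤ cfPartDen θ k := by
  have hnt : ¬(GenContFract.of θ).TerminatedAt (k - 1) := fun h =>
    let ⟨q, hq⟩ := (terminates_iff_rat θ).1 ⟨_, h⟩
    hθ ⟨q, hq.symm⟩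
  obtain ⟨b, hb⟩ := Option.ne_none_iff_exists'.1 (mt terminatedAt_iff_partDen_none.2 hnt)
  rw [cfPartDen, hb, Option.getD_some]
  exact of_one_le_get?_partDen hb

theorem mul_cfDen_sub_cfNum_ne_zero (hθ : Irrational θ) (k : ℕ) :
    θ * cfDen θ k - cfNum θ k ≠ 0 := by
  intro h
  obtain ⟨q, hq⟩ := exists_rat_eq_nth_conv θ k
  have hden : (GenContFract.of θ).dens k ≠ 0 := (zero_lt_one.trans_le (one_le_cfDen θ k)).ne'
  refine hθ ⟨q, ?_⟩
  rw [← hq, conv_eq_num_div_den, div_eq_iff hden]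
  exact (sub_eq_zero.1 h).symm

end ContinuedFractionData

theorem continuousAt_effrosShenConst (N : ℕ) {θ : ℝ} (hθ : Irrational θ) :
    ContinuousAt (effrosShenConst N) θ := by
  have hD : (θ * cfDen θ (N - 2) - cfNum θ (N - 2)) * cfPartDen θ N * (cfPartDen θ N + 1) ^ 2
      ≠ 0 := by
    have hr := one_le_cfPartDen hθ N
    exact mul_ne_zero (mul_ne_zero (mul_cfDen_sub_cfNum_ne_zero hθ (N - 2)) (by linarith))
      (by positivity)
  have hcont : ContinuousAt (fun x => (x * cfDen θ N - cfNum θ N) /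
      ((x * cfDen θ (N - 2) - cfNum θ (N - 2)) * cfPartDen θ N * (cfPartDen θ N + 1) ^ 2)) θ :=
    by fun_prop (disch := exact hD)
  refine hcont.congr_of_eventuallyEq ?_
  filter_upwards [eventually_cfNum_eq hθ N, eventually_cfDen_eq hθ N,
    eventually_cfNum_eq hθ (N - 2), eventually_cfDen_eq hθ (N - 2),
    eventually_cfPartDen_eq hθ N] with x hpN hqN hpN₂ hqN₂ hr
  rw [effrosShenConst, hpN, hqN, hpN₂, hqN₂, hr]

theorem effrosShenConst_tendsto_general
    (N : ℕ)
    (θ : ℝ) (hθirr : Irrational θ)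
    (θs : ℕ → ℝ)
    (hconv : Filter.Tendsto θs Filter.atTop (nhds θ)) :
    Filter.Tendsto (fun j => effrosShenConst N (θs j)) Filter.atTop
      (nhds (effrosShenConst N θ)) :=
  (continuousAt_effrosShenConst N hθirr).tendsto.comp hconv

/-- The equivalence constants for the Effros–Shen finite-dimensional algebras vary
continuously with respect to the irrational parameter. -/
theorem effrosShenConst_tendsto
    (N : ℕ) (hN : 2 ≤ N)
    (θ : ℝ) (hθ : θ ∈ Set.Ioo (0 : ℝ) 1) (hθirr : Irrational θ)
    (θs : ℕ → ℝ) (hθs : ∀ j, θs j ∈ Set.Ioo (0 : ℝ) 1 ∧ Irrational (θs j))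
    (hconv : Filter.Tendsto θs Filter.atTop (nhds θ)) :
    Filter.Tendsto (fun j => effrosShenConst N (θs j)) Filter.atTop
      (nhds (effrosShenConst N θ)) :=
  effrosShenConst_tendsto_general N θ hθirr θs hconv
end

section
/- The map sending an irrational θ ∈ (0,1) to its sequence of continued fraction partial denominators (r_1(θ), r_2(θ), r_3(θ), …) is a homeomorphism from the set {θ ∈ ℝ : 0 < θ < 1 and θ irrational}, with the subspace topology inherited from ℝ, onto the space of all sequences of positive integers (ℕ → {m : ℕ // 1 ≤ m}) with the product topology (the topology induced by the Baire metric d_B(x,y) = 2^{−min{n : x_n ≠ y_n}} for x ≠ y). -/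
open Filter Topology Set GenContFract

noncomputable def gaussMap (x : ℝ) : ℝ := Int.fract x⁻¹

theorem irrational_gaussMap_iterate {x : ℝ} (hx : Irrational x) (n : ℕ) :
    Irrational (gaussMap^[n] x) := by
  induction n with
  | zero => exact hx
  | succ n ih => rw [Function.iterate_succ_apply']; exact ih.inv.sub_intCast _

theorem Irrational.eventually_floor_eq {x : ℝ} (hx : Irrational x) :
    ∀ᶠ y in 𝓝 x, ⌊y⌋ = ⌊x⌋ := by
  have hlt : (⌊x⌋ : ℝ) < x := (Int.floor_le x).lt_of_ne (hx.ne_int _).symm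
  filter_upwards [Ioo_mem_nhds hlt (Int.lt_floor_add_one x)] with y hy
  exact Int.floor_eq_iff.2 ⟨hy.1.le, hy.2⟩

theorem continuousAt_gaussMap {x : ℝ} (hx : Irrational x) :
    ContinuousAt gaussMap x :=
  (continuousAt_fract (hx.inv.ne_int _)).comp (continuousAt_inv₀ hx.ne_zero)

theorem continuousAt_gaussMap_iterate {x : ℝ} (hx : Irrational x) (n : ℕ) :
    ContinuousAt gaussMap^[n] x := by
  induction n with
  | zero => exact continuousAt_id
  | succ n ih =>
    rw [Function.iterate_succ']
    exact (continuousAt_gaussMap (irrational_gaussMap_iterate hx n)).comp ih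

theorem eventually_natFloor_inv_gaussMap_iterate_eq {x : ℝ} (hx : Irrational x)
    (n : ℕ) : ∀ᶠ y in 𝓝 x, ⌊(gaussMap^[n] y)⁻¹⌋₊ = ⌊(gaussMap^[n] x)⁻¹⌋₊ := by
  have hxn := irrational_gaussMap_iterate hx n
  have hinv : Tendsto (fun y => (gaussMap^[n] y)⁻¹) (𝓝 x) (𝓝 (gaussMap^[n] x)⁻¹) :=
    (continuousAt_inv₀ hxn.ne_zero).comp (continuousAt_gaussMap_iterate hx n)
  filter_upwards [hinv.eventually hxn.inv.eventually_floor_eq] with y hy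
  rw [← Int.floor_toNat, hy, Int.floor_toNat]

theorem intFractPair_stream_succ {x : ℝ} {n : ℕ}
    (h : ∀ k ≤ n, gaussMap^[k] (Int.fract x) ≠ 0) :
    IntFractPair.stream x (n + 1) =
      some ⟨⌊(gaussMap^[n] (Int.fract x))⁻¹⌋, gaussMap^[n + 1] (Int.fract x)⟩ := by
  induction n with
  | zero => exact IntFractPair.stream_succ_of_some (IntFractPair.stream_zero x) (h 0 le_rfl)
  | succ n ih =>
    rw [IntFractPair.stream_succ_of_some (ih fun k hk => h k (Nat.le_succ_of_le hk)) (h _ le_rfl),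
      Function.iterate_succ_apply' gaussMap (n + 1)]
    rfl

theorem partDens_get?_of {x : ℝ} {n : ℕ} (h : ∀ k ≤ n, gaussMap^[k] (Int.fract x) ≠ 0) :
    (GenContFract.of x).partDens.get? n = some (⌊(gaussMap^[n] (Int.fract x))⁻¹⌋ : ℝ) := by
  rw [partDens, Stream'.Seq.map_get?,
    get?_of_eq_some_of_succ_get?_intFractPair_stream (intFractPair_stream_succ h)]
  rfl

theorem irrational_of_gaussMap_iterate_ne_zero {x : ℝ}
    (h : ∀ n, gaussMap^[n] (Int.fract x) ≠ 0) : Irrational x := by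
  rintro ⟨q, rfl⟩
  obtain ⟨n, hn⟩ := (terminates_iff_rat (q : ℝ)).2 ⟨q, rfl⟩
  rw [Stream'.Seq.TerminatedAt, get?_of_eq_some_of_succ_get?_intFractPair_stream
    (intFractPair_stream_succ (n := n) fun k _ => h k)] at hn
  exact Option.some_ne_none _ hn

-- `cfPrefix a n y = [0; a 0, …, a (n - 1) + y] = 1 / (a 0 + 1 / (⋯ + 1 / (a (n - 1) + y)))`
noncomputable def cfPrefix (a : ℕ → ℝ) : ℕ → ℝ → ℝ
  | 0, y => y
  | n + 1, y => (a 0 + cfPrefix (fun k => a (k + 1)) n y)⁻¹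

theorem cfPrefix_add (a : ℕ → ℝ) (m n : ℕ) (y : ℝ) :
    cfPrefix a (m + n) y = cfPrefix a m (cfPrefix (fun k => a (k + m)) n y) := by
  induction m generalizing a with
  | zero => simp only [Nat.zero_add, Nat.add_zero]; rfl
  | succ m ih =>
    rw [Nat.add_right_comm, cfPrefix, ih]
    rfl

theorem cfPrefix_congr {a b : ℕ → ℝ} {n : ℕ} (h : ∀ k < n, a k = b k) :
    cfPrefix a n = cfPrefix b n := by
  induction n generalizing a b with
  | zero => rfl
  | succ n ih =>
    funext y
    rw [cfPrefix, cfPrefix, h 0 n.succ_pos, ih fun k hk => h (k + 1) (Nat.succ_lt_succ hk)]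

theorem cfPrefix_mem_Icc {a : ℕ → ℝ} (ha : ∀ k, 1 ≤ a k) (n : ℕ) {y : ℝ}
    (hy : y ∈ Icc 0 1) : cfPrefix a n y ∈ Icc 0 1 := by
  induction n generalizing a with
  | zero => exact hy
  | succ n ih =>
    have h := (ih fun k => ha (k + 1)).1
    exact ⟨inv_nonneg.2 (by linarith [ha 0]), inv_le_one_of_one_le₀ (by linarith [ha 0])⟩

theorem abs_cfPrefix_two_sub_le {a : ℕ → ℝ} (ha0 : 1 ≤ a 0) (ha1 : 1 ≤ a 1) {u v : ℝ}
    (hu : 0 ≤ u) (hv : 0 ≤ v) : |cfPrefix a 2 u - cfPrefix a 2 v| ≤ |u - v| / 4 := by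
  have key : ∀ w, 0 ≤ w → cfPrefix a 2 w = (a 1 + w) / (a 0 * (a 1 + w) + 1) := by
    intro w hw
    have : a 1 + w ≠ 0 := by linarith
    simp only [cfPrefix]
    field_simp
  have h2u : 2 ≤ a 0 * (a 1 + u) + 1 := by nlinarith
  have h2v : 2 ≤ a 0 * (a 1 + v) + 1 := by nlinarith
  rw [key u hu, key v hv, div_sub_div _ _ (by linarith) (by linarith)]
  have e : (a 1 + u) * (a 0 * (a 1 + v) + 1) - (a 0 * (a 1 + u) + 1) * (a 1 + v) = u - v := by
    ring
  have hD : 4 ≤ (a 0 * (a 1 + u) + 1) * (a 0 * (a 1 + v) + 1) := by nlinarith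
  rw [e, abs_div, abs_of_pos (lt_of_lt_of_le (by norm_num) hD)]
  exact div_le_div_of_nonneg_left (abs_nonneg _) (by norm_num) hD

theorem abs_cfPrefix_sub_le {a : ℕ → ℝ} (ha : ∀ k, 1 ≤ a k) (n : ℕ) {y z : ℝ}
    (hy : y ∈ Icc 0 1) (hz : z ∈ Icc 0 1) :
    |cfPrefix a n y - cfPrefix a n z| ≤ 2 * (1 / 2) ^ n := by
  induction n using Nat.twoStepInduction generalizing a with
  | zero => exact (abs_sub_le_of_nonneg_of_le hy.1 hy.2 hz.1 hz.2).trans (by norm_num)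
  | one =>
    obtain ⟨hy0, hy1⟩ := cfPrefix_mem_Icc ha 1 hy
    obtain ⟨hz0, hz1⟩ := cfPrefix_mem_Icc ha 1 hz
    exact (abs_sub_le_of_nonneg_of_le hy0 hy1 hz0 hz1).trans (by norm_num)
  | more n ih _ =>
    have ha2 : ∀ k, 1 ≤ a (k + 2) := fun k => ha (k + 2)
    rw [add_comm n 2, cfPrefix_add, cfPrefix_add]
    calc _ ≤ |cfPrefix (fun k => a (k + 2)) n y - cfPrefix (fun k => a (k + 2)) n z| / 4 :=
          abs_cfPrefix_two_sub_le (ha 0) (ha 1) (cfPrefix_mem_Icc ha2 n hy).1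
            (cfPrefix_mem_Icc ha2 n hz).1
      _ ≤ 2 * (1 / 2) ^ n / 4 := by gcongr; exact ih ha2
      _ = 2 * (1 / 2) ^ (2 + n) := by ring

theorem eq_inv_floor_inv_add_gaussMap (x : ℝ) : x = (⌊x⁻¹⌋ + gaussMap x)⁻¹ := by
  rw [gaussMap, Int.floor_add_fract, inv_inv]

theorem eq_cfPrefix_gaussMap_iterate (x : ℝ) (n : ℕ) :
    x = cfPrefix (fun k => ⌊(gaussMap^[k] x)⁻¹⌋) n (gaussMap^[n] x) := by
  induction n generalizing x with
  | zero => rfl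
  | succ n ih =>
    rw [cfPrefix]
    simp only [Function.iterate_succ_apply, Function.iterate_zero_apply]
    rw [← ih]
    exact eq_inv_floor_inv_add_gaussMap x

theorem tendsto_two_mul_half_pow :
    Tendsto (fun n : ℕ => 2 * (1 / 2 : ℝ) ^ n) atTop (𝓝 0) := by
  simpa using (tendsto_pow_atTop_nhds_zero_of_lt_one (by norm_num : (0 : ℝ) ≤ 1 / 2)
    (by norm_num)).const_mul 2

noncomputable def cfValue (a : ℕ → ℝ) : ℝ := limUnder atTop fun n => cfPrefix a n 0

section cfValue

variable {a : ℕ → ℝ}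

theorem tendsto_cfPrefix_cfValue (ha : ∀ k, 1 ≤ a k) :
    Tendsto (fun n => cfPrefix a n 0) atTop (𝓝 (cfValue a)) := by
  refine (cauchySeq_of_le_tendsto_0 _ (fun n m N hn hm => ?_)
    tendsto_two_mul_half_pow).tendsto_limUnder
  have hshift : ∀ k, 1 ≤ a (k + N) := fun k => ha (k + N)
  have h0 : (0 : ℝ) ∈ Icc 0 1 := ⟨le_rfl, zero_le_one⟩
  rw [← Nat.add_sub_cancel' hn, ← Nat.add_sub_cancel' hm, cfPrefix_add, cfPrefix_add]
  exact abs_cfPrefix_sub_le ha N (cfPrefix_mem_Icc hshift _ h0) (cfPrefix_mem_Icc hshift _ h0)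

theorem cfValue_mem_Icc (ha : ∀ k, 1 ≤ a k) : cfValue a ∈ Icc 0 1 :=
  isClosed_Icc.mem_of_tendsto (tendsto_cfPrefix_cfValue ha)
    (Eventually.of_forall fun n => cfPrefix_mem_Icc ha n ⟨le_rfl, zero_le_one⟩)

theorem cfValue_eq_inv (ha : ∀ k, 1 ≤ a k) :
    cfValue a = (a 0 + cfValue fun k => a (k + 1))⁻¹ := by
  have hshift : ∀ k, 1 ≤ a (k + 1) := fun k => ha (k + 1)
  have hne : a 0 + cfValue (fun k => a (k + 1)) ≠ 0 := by
    linarith [ha 0, (cfValue_mem_Icc hshift).1]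
  refine tendsto_nhds_unique ((tendsto_cfPrefix_cfValue ha).comp (tendsto_add_atTop_nat 1)) ?_
  exact (tendsto_const_nhds.add (tendsto_cfPrefix_cfValue hshift)).inv₀ hne

theorem cfValue_eq_cfPrefix (ha : ∀ k, 1 ≤ a k) (n : ℕ) :
    cfValue a = cfPrefix a n (cfValue fun k => a (k + n)) := by
  induction n generalizing a with
  | zero => rfl
  | succ n ih =>
    rw [cfValue_eq_inv ha, ih fun k => ha (k + 1)]
    rfl

theorem eq_cfValue_of_forall_eq_cfPrefix (ha : ∀ k, 1 ≤ a k) {x : ℝ}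
    (hx : ∀ n, ∃ y ∈ Icc 0 1, x = cfPrefix a n y) : x = cfValue a := by
  have hle : ∀ n, |x - cfValue a| ≤ 2 * (1 / 2) ^ n := fun n => by
    obtain ⟨y, hy, hxy⟩ := hx n
    rw [hxy, cfValue_eq_cfPrefix ha n]
    exact abs_cfPrefix_sub_le ha n hy (cfValue_mem_Icc fun k => ha (k + n))
  exact sub_eq_zero.1 (abs_nonpos_iff.1 (ge_of_tendsto' tendsto_two_mul_half_pow hle))

theorem abs_cfValue_sub_le {b : ℕ → ℝ} (ha : ∀ k, 1 ≤ a k) (hb : ∀ k, 1 ≤ b k) {n : ℕ}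
    (hab : ∀ k < n, a k = b k) : |cfValue a - cfValue b| ≤ 2 * (1 / 2) ^ n := by
  rw [cfValue_eq_cfPrefix ha n, cfValue_eq_cfPrefix hb n, cfPrefix_congr hab]
  exact abs_cfPrefix_sub_le hb n (cfValue_mem_Icc fun k => ha (k + n))
    (cfValue_mem_Icc fun k => hb (k + n))

end cfValue

theorem one_le_digit (a : ℕ → {m : ℕ // 1 ≤ m}) (k : ℕ) : (1 : ℝ) ≤ (a k : ℕ) := by
  exact_mod_cast (a k).2

theorem cfValue_mem_Ioo (a : ℕ → {m : ℕ // 1 ≤ m}) :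
    cfValue (fun k => ((a k : ℕ) : ℝ)) ∈ Ioo 0 1 := by
  have hpos (b : ℕ → {m : ℕ // 1 ≤ m}) : 0 < cfValue fun k => ((b k : ℕ) : ℝ) := by
    rw [cfValue_eq_inv (one_le_digit b)]
    have := (cfValue_mem_Icc fun k => one_le_digit b (k + 1)).1
    exact inv_pos.2 (by linarith [one_le_digit b 0])
  refine ⟨hpos a, ?_⟩
  rw [cfValue_eq_inv (one_le_digit a)]
  exact inv_lt_one_of_one_lt₀ (by linarith [one_le_digit a 0, hpos fun k => a (k + 1)])

theorem natFloor_inv_cfValue (a : ℕ → {m : ℕ // 1 ≤ m}) :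
    ⌊(cfValue fun k => ((a k : ℕ) : ℝ))⁻¹⌋₊ = a 0 := by
  have h := cfValue_mem_Ioo fun k => a (k + 1)
  rw [cfValue_eq_inv (one_le_digit a), inv_inv, Nat.floor_eq_iff (by linarith [h.1])]
  constructor <;> linarith [h.1, h.2]

theorem gaussMap_cfValue (a : ℕ → {m : ℕ // 1 ≤ m}) :
    gaussMap (cfValue fun k => ((a k : ℕ) : ℝ)) =
      cfValue fun k => ((a (k + 1) : ℕ) : ℝ) := by
  have h := cfValue_mem_Ioo fun k => a (k + 1)
  rw [gaussMap, cfValue_eq_inv (one_le_digit a), inv_inv, Int.fract_natCast_add,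
    Int.fract_eq_self.2 ⟨h.1.le, h.2⟩]

theorem gaussMap_iterate_cfValue (a : ℕ → {m : ℕ // 1 ≤ m}) (n : ℕ) :
    gaussMap^[n] (cfValue fun k => ((a k : ℕ) : ℝ)) =
      cfValue fun k => ((a (k + n) : ℕ) : ℝ) := by
  induction n with
  | zero => rfl
  | succ n ih =>
    rw [Function.iterate_succ_apply', ih, gaussMap_cfValue]
    simp only [Nat.add_right_comm _ 1 n]
    rfl

theorem irrational_cfValue (a : ℕ → {m : ℕ // 1 ≤ m}) :
    Irrational (cfValue fun k => ((a k : ℕ) : ℝ)) := by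
  have h := cfValue_mem_Ioo a
  refine irrational_of_gaussMap_iterate_ne_zero fun n => ?_
  rw [Int.fract_eq_self.2 ⟨h.1.le, h.2⟩, gaussMap_iterate_cfValue]
  exact (cfValue_mem_Ioo _).1.ne'

theorem continuous_cfValue :
    Continuous fun a : ℕ → {m : ℕ // 1 ≤ m} => cfValue fun k => ((a k : ℕ) : ℝ) := by
  refine continuous_iff_continuousAt.2 fun a => Metric.tendsto_nhds.2 fun ε hε => ?_
  obtain ⟨n, hn⟩ := (tendsto_two_mul_half_pow.eventually (gt_mem_nhds hε)).exists
  have hagree : ∀ᶠ b in 𝓝 a, ∀ k ∈ {k | k < n}, b k = a k :=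
    (finite_lt_nat n).eventually_all.2 fun k _ =>
      (continuous_apply k).continuousAt.eventually_mem (isOpen_discrete {a k} |>.mem_nhds rfl)
  filter_upwards [hagree] with b hb
  rw [Real.dist_eq]
  exact (abs_cfValue_sub_le (one_le_digit b) (one_le_digit a)
    fun k hk => by rw [hb k hk]).trans_lt hn

local notation "𝕀" => {θ : ℝ // 0 < θ ∧ θ < 1 ∧ Irrational θ}

theorem gaussMap_iterate_mem_Ioo (θ : 𝕀) (n : ℕ) : gaussMap^[n] θ.1 ∈ Ioo 0 1 := by
  cases n with
  | zero => exact ⟨θ.2.1, θ.2.2.1⟩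
  | succ n =>
    have h := irrational_gaussMap_iterate θ.2.2.2 (n + 1)
    rw [Function.iterate_succ_apply'] at h ⊢
    exact ⟨(Int.fract_nonneg _).lt_of_ne h.ne_zero.symm, Int.fract_lt_one _⟩

noncomputable def cfDigits (θ : 𝕀) (n : ℕ) : {m : ℕ // 1 ≤ m} :=
  ⟨⌊(gaussMap^[n] θ.1)⁻¹⌋₊, (Nat.one_le_floor_iff _).2 <|
    (one_le_inv₀ (gaussMap_iterate_mem_Ioo θ n).1).2 (gaussMap_iterate_mem_Ioo θ n).2.le⟩

theorem cast_cfDigits (θ : 𝕀) (n : ℕ) :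
    ((cfDigits θ n : ℕ) : ℝ) = ⌊(gaussMap^[n] θ.1)⁻¹⌋ :=
  natCast_floor_eq_intCast_floor (inv_nonneg.2 (gaussMap_iterate_mem_Ioo θ n).1.le)

theorem continuous_cfDigits : Continuous cfDigits :=
  continuous_pi fun n => IsLocallyConstant.continuous <|
    (IsLocallyConstant.iff_eventually_eq _).2 fun θ =>
      continuous_subtype_val.continuousAt.eventually
        (eventually_natFloor_inv_gaussMap_iterate_eq θ.2.2.2 n) |>.mono fun _ h => Subtype.ext h

theorem cfValue_cfDigits (θ : 𝕀) : cfValue (fun k => ((cfDigits θ k : ℕ) : ℝ)) = θ := by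
  refine (eq_cfValue_of_forall_eq_cfPrefix (one_le_digit _) fun n =>
    ⟨gaussMap^[n] θ.1, Ioo_subset_Icc_self (gaussMap_iterate_mem_Ioo θ n), ?_⟩).symm
  simp only [cast_cfDigits]
  exact eq_cfPrefix_gaussMap_iterate θ.1 n

noncomputable def cfOfDigits (a : ℕ → {m : ℕ // 1 ≤ m}) : 𝕀 :=
  ⟨cfValue fun k => ((a k : ℕ) : ℝ), (cfValue_mem_Ioo a).1, (cfValue_mem_Ioo a).2,
    irrational_cfValue a⟩

theorem cfDigits_cfOfDigits (a : ℕ → {m : ℕ // 1 ≤ m}) : cfDigits (cfOfDigits a) = a := by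
  funext n
  refine Subtype.ext ?_
  show ⌊(gaussMap^[n] (cfValue fun k => ((a k : ℕ) : ℝ)))⁻¹⌋₊ = _
  rw [gaussMap_iterate_cfValue, natFloor_inv_cfValue, Nat.zero_add]

noncomputable def cfHomeomorph : 𝕀 ≃ₜ (ℕ → {m : ℕ // 1 ≤ m}) where
  toFun := cfDigits
  invFun := cfOfDigits
  left_inv θ := Subtype.ext (cfValue_cfDigits θ)
  right_inv := cfDigits_cfOfDigits
  continuous_toFun := continuous_cfDigits
  continuous_invFun := continuous_cfValue.subtype_mk _

theorem cfPartDen_succ (θ : 𝕀) (k : ℕ) :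
    cfPartDen θ.1 (k + 1) = ⌊(gaussMap^[k] θ.1)⁻¹⌋ := by
  have hfract : Int.fract θ.1 = θ.1 := Int.fract_eq_self.2 ⟨θ.2.1.le, θ.2.2.1⟩
  rw [cfPartDen, Nat.add_sub_cancel, partDens_get?_of fun j _ => ?_, hfract]
  · rfl
  · rw [hfract]; exact (gaussMap_iterate_mem_Ioo θ j).1.ne'

/-- The map sending an irrational `θ ∈ (0,1)` to its sequence of continued fraction
partial denominators `(r_1(θ), r_2(θ), …)` is a homeomorphism onto the Baire space of
positive integer sequences (with the product topology). -/
theorem contFract_partDens_homeomorph_baireSpace :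
    ∃ h : {θ : ℝ // 0 < θ ∧ θ < 1 ∧ Irrational θ} ≃ₜ (ℕ → {m : ℕ // 1 ≤ m}),
      ∀ (θ : {θ : ℝ // 0 < θ ∧ θ < 1 ∧ Irrational θ}) (k : ℕ),
        ((h θ k : ℕ) : ℝ) = cfPartDen θ.1 (k + 1) :=
  ⟨cfHomeomorph, fun θ k => (cast_cfDigits θ k).trans (cfPartDen_succ θ k).symm⟩
end
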